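/- arXiv:1207.3240 — 7 statements merged into one kernel-verified Lean document; each statement's English description precedes it below -/
import Mathlib

section
/- Let A be a self-adjoint operator on a two-dimensional inner product space with eigenvalues μ = λ_max and ν = λ_min. Then for every nonzero vector x, (μ − ρ(x))(ρ(x) − ν) = ‖r(x)‖²/‖x‖², where r(x) = Ax − ρ(x)x. -/
/-!
For any operator `A` and any reals `μ, ν`, expanding `‖r(x)‖² = ‖Ax‖² - ρ(x)²‖x‖²` gives
`(μ - ρ(x))(ρ(x) - ν)‖x‖² = ‖r(x)‖² - ⟪Ax - μx, Ax - νx⟫`. In dimension two the eigenvectors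
span, so `(A - μ)(A - ν) = 0`, and self-adjointness turns the last inner product into
`⟪x, (A - μ)(A - ν)x⟫ = 0`.
-/

open scoped RealInnerProductSpace
open Submodule

noncomputable section

variable {H : Type*} [NormedAddCommGroup H] [InnerProductSpace ℝ H]

/-- The Rayleigh quotient of `x` with respect to `A`. -/
def rq (A : H →L[ℝ] H) (x : H) : ℝ := ⟪x, A x⟫ / ⟪x, x⟫

/-- The residual of `x` with respect to `A`. -/
def res (A : H →L[ℝ] H) (x : H) : H := A x - rq A x • x

/-- The acute angle between two vectors. -/
def ang (x y : H) : ℝ := Real.arccos (|⟪x, y⟫| / (‖x‖ * ‖y‖))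

theorem Module.End.sub_smul_mul_sub_smul_eq_zero_of_finrank_eq_two {K V : Type*} [Field K]
    [AddCommGroup V] [Module K V] (hdim : Module.finrank K V = 2) {f : Module.End K V}
    {μ ν : K} {u₁ u₂ : V} (hu : LinearIndependent K ![u₁, u₂]) (h₁ : f u₁ = μ • u₁)
    (h₂ : f u₂ = ν • u₂) :
    (f - μ • 1) * (f - ν • 1) = 0 := by
  refine LinearMap.ext_on_range (hu.span_eq_top_of_card_eq_finrank (by simp [hdim])) fun i ↦ ?_
  fin_cases i
  · simp [h₁, smul_sub, smul_smul, mul_comm]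
  · simp [h₂]

theorem LinearMap.IsSymmetric.inner_sub_smul_sub_smul_eq_zero {T : Module.End ℝ H}
    (hT : T.IsSymmetric) {μ ν : ℝ} (h : (T - μ • 1) * (T - ν • 1) = 0) (x : H) :
    ⟪T x - μ • x, T x - ν • x⟫ = 0 := by
  have hker : T (T x - ν • x) - μ • (T x - ν • x) = 0 := by simpa using LinearMap.congr_fun h x
  calc ⟪T x - μ • x, T x - ν • x⟫ = ⟪x, T (T x - ν • x) - μ • (T x - ν • x)⟫ := by
        rw [inner_sub_left, hT, inner_sub_right x, real_inner_smul_left, real_inner_smul_right]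
    _ = 0 := by rw [hker, inner_zero_right]

theorem inner_apply_eq_rq_mul_inner_self (A : H →L[ℝ] H) {x : H} (hx : x ≠ 0) :
    ⟪x, A x⟫ = rq A x * ⟪x, x⟫ := by
  rw [rq, div_mul_cancel₀ _ (inner_self_ne_zero.mpr hx)]

theorem sub_rq_mul_rq_sub_mul_norm_sq (A : H →L[ℝ] H) {x : H} (hx : x ≠ 0) (μ ν : ℝ) :
    (μ - rq A x) * (rq A x - ν) * ‖x‖ ^ 2 = ‖res A x‖ ^ 2 - ⟪A x - μ • x, A x - ν • x⟫ := by
  rw [← real_inner_self_eq_norm_sq x, ← real_inner_self_eq_norm_sq (res A x), res]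
  simp only [inner_sub_left, inner_sub_right, real_inner_smul_left, real_inner_smul_right,
    real_inner_comm x (A x), inner_apply_eq_rq_mul_inner_self A hx]
  ring

theorem stmt_4_general [FiniteDimensional ℝ H] (hdim : Module.finrank ℝ H = 2)
    (A : H →L[ℝ] H) (hA : IsSelfAdjoint A)
    (μ ν : ℝ) (u₁ u₂ : H) (hu₁ : ‖u₁‖ = 1) (hu₂ : ‖u₂‖ = 1)
    (horth : ⟪u₁, u₂⟫ = 0) (he₁ : A u₁ = μ • u₁) (he₂ : A u₂ = ν • u₂)
    (x : H) (hx : x ≠ 0) :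
    (μ - rq A x) * (rq A x - ν) = ‖res A x‖ ^ 2 / ‖x‖ ^ 2 := by
  have hli : LinearIndependent ℝ ![u₁, u₂] := by
    refine linearIndependent_of_ne_zero_of_inner_eq_zero (fun i ↦ ?_) fun i j hij ↦ ?_
    · fin_cases i <;> simp [← norm_ne_zero_iff, hu₁, hu₂]
    · fin_cases i <;> fin_cases j <;> simp_all [real_inner_comm u₁]
  have hquad := Module.End.sub_smul_mul_sub_smul_eq_zero_of_finrank_eq_two hdim hli he₁ he₂
  have hinner : ⟪A x - μ • x, A x - ν • x⟫ = 0 :=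
    hA.isSymmetric.inner_sub_smul_sub_smul_eq_zero hquad x
  rw [eq_div_iff (by positivity), sub_rq_mul_rq_sub_mul_norm_sq A hx, hinner, sub_zero]

/-- In a two-dimensional space, if `μ ≥ ν` are the eigenvalues of a self-adjoint `A`
(with orthonormal eigenvectors `u₁, u₂`), then for every nonzero `x`:
`(μ − ρ(x))(ρ(x) − ν) = ‖r(x)‖²/‖x‖²`. -/
theorem stmt_4 [FiniteDimensional ℝ H] (hdim : Module.finrank ℝ H = 2)
    (A : H →L[ℝ] H) (hA : IsSelfAdjoint A)
    (μ ν : ℝ) (hμν : ν ≤ μ) (u₁ u₂ : H) (hu₁ : ‖u₁‖ = 1) (hu₂ : ‖u₂‖ = 1)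
    (horth : ⟪u₁, u₂⟫ = 0) (he₁ : A u₁ = μ • u₁) (he₂ : A u₂ = ν • u₂)
    (x : H) (hx : x ≠ 0) :
    (μ - rq A x) * (rq A x - ν) = ‖res A x‖ ^ 2 / ‖x‖ ^ 2 :=
  stmt_4_general hdim A hA μ ν u₁ u₂ hu₁ hu₂ horth he₁ he₂ x hx
end
end

section
/- Let A be a self-adjoint operator on a two-dimensional inner product space with eigenvalues μ = λ_max and ν = λ_min and eigenvector u₁ corresponding to μ. Then for every nonzero vector x, (1/2)(μ − ν) sin(2∠{x,u₁}) = ‖r(x)‖/‖x‖. -/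
/-! In the orthonormal eigenbasis write `x = a u₁ + b u₂`, so `‖x‖² = a² + b²`. Then
`ρ(x) = (μa² + νb²)/(a² + b²)` and the residual is `((μ - ν)ab/‖x‖²) (b u₁ - a u₂)`, a multiple of
`x` turned by a right angle, so `‖r(x)‖ = (μ - ν)|ab|/‖x‖`. On the other side
`cos ∠{x,u₁} = |a|/‖x‖` and `sin ∠{x,u₁} = |b|/‖x‖`, so `½ sin 2∠{x,u₁} = |ab|/‖x‖²`. -/

open scoped RealInnerProductSpace
open Submodule

noncomputable section

variable {H : Type*} [NormedAddCommGroup H] [InnerProductSpace ℝ H]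

theorem cos_ang (x y : H) : Real.cos (ang x y) = |⟪x, y⟫| / (‖x‖ * ‖y‖) := by
  have hle := abs_real_inner_div_norm_mul_norm_le_one x y
  rw [abs_div, abs_mul, abs_norm, abs_norm] at hle
  exact Real.cos_arccos (by linarith [show 0 ≤ |⟪x, y⟫| / (‖x‖ * ‖y‖) by positivity]) hle

theorem sin_ang (x y : H) : Real.sin (ang x y) = √(1 - Real.cos (ang x y) ^ 2) :=
  Real.sin_eq_sqrt_one_sub_cos_sq (Real.arccos_nonneg _) (Real.arccos_le_pi _)

section OrthonormalPair

variable {u₁ u₂ : H}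

theorem eq_inner_smul_add_inner_smul_of_finrank_eq_two (hdim : Module.finrank ℝ H = 2)
    (hu₁ : ‖u₁‖ = 1) (hu₂ : ‖u₂‖ = 1) (horth : ⟪u₁, u₂⟫ = 0) (x : H) :
    x = ⟪u₁, x⟫ • u₁ + ⟪u₂, x⟫ • u₂ := by
  have hon : Orthonormal ℝ ![u₁, u₂] := by simp [hu₁, hu₂, horth]
  have hsp := hon.linearIndependent.span_eq_top_of_card_eq_finrank (by simp [hdim])
  simpa using ((OrthonormalBasis.mk hon hsp.ge).sum_repr' x).symm

theorem inner_smul_add_smul (hu₁ : ‖u₁‖ = 1) (hu₂ : ‖u₂‖ = 1) (horth : ⟪u₁, u₂⟫ = 0)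
    (a b c d : ℝ) : ⟪a • u₁ + b • u₂, c • u₁ + d • u₂⟫ = a * c + b * d := by
  simp only [inner_add_left, inner_add_right, real_inner_smul_left, real_inner_smul_right,
    real_inner_self_eq_norm_sq, real_inner_comm u₁ u₂, hu₁, hu₂, horth]
  ring

theorem norm_smul_add_smul (hu₁ : ‖u₁‖ = 1) (hu₂ : ‖u₂‖ = 1) (horth : ⟪u₁, u₂⟫ = 0)
    (a b : ℝ) : ‖a • u₁ + b • u₂‖ = √(a ^ 2 + b ^ 2) := by
  rw [norm_eq_sqrt_real_inner, inner_smul_add_smul hu₁ hu₂ horth, sq, sq]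

theorem sin_two_mul_ang_smul_add_smul (hu₁ : ‖u₁‖ = 1) (hu₂ : ‖u₂‖ = 1) (horth : ⟪u₁, u₂⟫ = 0)
    {a b : ℝ} (hab : 0 < a ^ 2 + b ^ 2) :
    Real.sin (2 * ang (a • u₁ + b • u₂) u₁) = 2 * |a * b| / (a ^ 2 + b ^ 2) := by
  have hcos : Real.cos (ang (a • u₁ + b • u₂) u₁) = |a| / √(a ^ 2 + b ^ 2) := by
    have hinner : ⟪a • u₁ + b • u₂, u₁⟫ = a := by
      simpa using inner_smul_add_smul hu₁ hu₂ horth a b 1 0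
    rw [cos_ang, hinner, hu₁, mul_one, norm_smul_add_smul hu₁ hu₂ horth]
  have hsin : Real.sin (ang (a • u₁ + b • u₂) u₁) = |b| / √(a ^ 2 + b ^ 2) := by
    have hsq : 1 - (|a| / √(a ^ 2 + b ^ 2)) ^ 2 = (|b| / √(a ^ 2 + b ^ 2)) ^ 2 := by
      rw [div_pow, div_pow, sq_abs, sq_abs, Real.sq_sqrt hab.le]
      field_simp
      ring
    rw [sin_ang, hcos, hsq, Real.sqrt_sq (by positivity)]
  rw [Real.sin_two_mul, hsin, hcos, abs_mul]
  field_simp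
  rw [Real.sq_sqrt hab.le]

variable {A : H →L[ℝ] H} {μ ν : ℝ}

theorem apply_smul_add_smul (he₁ : A u₁ = μ • u₁) (he₂ : A u₂ = ν • u₂) (a b : ℝ) :
    A (a • u₁ + b • u₂) = (μ * a) • u₁ + (ν * b) • u₂ := by
  simp only [map_add, map_smul, he₁, he₂, smul_smul, mul_comm]

theorem rq_smul_add_smul (hu₁ : ‖u₁‖ = 1) (hu₂ : ‖u₂‖ = 1) (horth : ⟪u₁, u₂⟫ = 0)
    (he₁ : A u₁ = μ • u₁) (he₂ : A u₂ = ν • u₂) (a b : ℝ) :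
    rq A (a • u₁ + b • u₂) = (μ * a ^ 2 + ν * b ^ 2) / (a ^ 2 + b ^ 2) := by
  rw [rq, apply_smul_add_smul he₁ he₂, inner_smul_add_smul hu₁ hu₂ horth,
    inner_smul_add_smul hu₁ hu₂ horth]
  ring

theorem res_smul_add_smul (hu₁ : ‖u₁‖ = 1) (hu₂ : ‖u₂‖ = 1) (horth : ⟪u₁, u₂⟫ = 0)
    (he₁ : A u₁ = μ • u₁) (he₂ : A u₂ = ν • u₂) {a b : ℝ} (hab : 0 < a ^ 2 + b ^ 2) :
    res A (a • u₁ + b • u₂) = ((μ - ν) * a * b / (a ^ 2 + b ^ 2)) • (b • u₁ - a • u₂) := by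
  rw [res, apply_smul_add_smul he₁ he₂, rq_smul_add_smul hu₁ hu₂ horth he₁ he₂]
  match_scalars <;> field_simp <;> ring

theorem norm_res_smul_add_smul (hu₁ : ‖u₁‖ = 1) (hu₂ : ‖u₂‖ = 1) (horth : ⟪u₁, u₂⟫ = 0)
    (he₁ : A u₁ = μ • u₁) (he₂ : A u₂ = ν • u₂) (hμν : ν ≤ μ) {a b : ℝ} (hab : 0 < a ^ 2 + b ^ 2) :
    ‖res A (a • u₁ + b • u₂)‖ = (μ - ν) * |a * b| / √(a ^ 2 + b ^ 2) := by
  have hrot : ‖b • u₁ - a • u₂‖ = √(a ^ 2 + b ^ 2) := by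
    rw [sub_eq_add_neg, ← neg_smul, norm_smul_add_smul hu₁ hu₂ horth, neg_sq, add_comm]
  rw [res_smul_add_smul hu₁ hu₂ horth he₁ he₂ hab, norm_smul, hrot, Real.norm_eq_abs, abs_div,
    abs_of_pos hab, mul_assoc, abs_mul, abs_of_nonneg (sub_nonneg.mpr hμν)]
  field_simp
  rw [Real.sq_sqrt hab.le]

end OrthonormalPair

theorem stmt_5_general (hdim : Module.finrank ℝ H = 2)
    (A : H →L[ℝ] H)
    (μ ν : ℝ) (hμν : ν ≤ μ) (u₁ u₂ : H) (hu₁ : ‖u₁‖ = 1) (hu₂ : ‖u₂‖ = 1)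
    (horth : ⟪u₁, u₂⟫ = 0) (he₁ : A u₁ = μ • u₁) (he₂ : A u₂ = ν • u₂)
    (x : H) (hx : x ≠ 0) :
    (1 / 2) * (μ - ν) * Real.sin (2 * ang x u₁) = ‖res A x‖ / ‖x‖ := by
  obtain ⟨a, b, rfl⟩ : ∃ a b : ℝ, x = a • u₁ + b • u₂ :=
    ⟨_, _, eq_inner_smul_add_inner_smul_of_finrank_eq_two hdim hu₁ hu₂ horth x⟩
  have hab : 0 < a ^ 2 + b ^ 2 := by
    rw [← Real.sqrt_pos, ← norm_smul_add_smul hu₁ hu₂ horth]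
    exact norm_pos_iff.mpr hx
  rw [sin_two_mul_ang_smul_add_smul hu₁ hu₂ horth hab,
    norm_res_smul_add_smul hu₁ hu₂ horth he₁ he₂ hμν hab, norm_smul_add_smul hu₁ hu₂ horth,
    div_div, Real.mul_self_sqrt hab.le]
  ring

/-- In a two-dimensional space, if `μ ≥ ν` are the eigenvalues of a self-adjoint `A`
with orthonormal eigenvectors `u₁, u₂` (`u₁` for `μ`), then for every nonzero `x`:
`(1/2)(μ − ν) sin(2∠{x,u₁}) = ‖r(x)‖/‖x‖`. -/
theorem stmt_5 [FiniteDimensional ℝ H] (hdim : Module.finrank ℝ H = 2)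
    (A : H →L[ℝ] H) (hA : IsSelfAdjoint A)
    (μ ν : ℝ) (hμν : ν ≤ μ) (u₁ u₂ : H) (hu₁ : ‖u₁‖ = 1) (hu₂ : ‖u₂‖ = 1)
    (horth : ⟪u₁, u₂⟫ = 0) (he₁ : A u₁ = μ • u₁) (he₂ : A u₂ = ν • u₂)
    (x : H) (hx : x ≠ 0) :
    (1 / 2) * (μ - ν) * Real.sin (2 * ang x u₁) = ‖res A x‖ / ‖x‖ :=
  stmt_5_general hdim A μ ν hμν u₁ u₂ hu₁ hu₂ horth he₁ he₂ x hx
end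
end

section
/- Let A be a bounded self-adjoint operator on a Hilbert space, and let x, y be linearly independent vectors with 0 < ∠{x,y} < π/2. Let S = span{x,y} and P_S the orthogonal projection onto S. Define Ξ_± = |‖P_S r(x)‖/‖x‖ ± ‖P_S r(y)‖/‖y‖|·tan(∠{x,y}). Then Ξ₋ ≤ |ρ(x) − ρ(y)| ≤ Ξ₊. -/
open scoped RealInnerProductSpace
open Submodule

noncomputable section

variable {H : Type*} [NormedAddCommGroup H] [InnerProductSpace ℝ H]

lemma key_geom (x y w : H) (hx : x ≠ 0) (hw : w ∈ Submodule.span ℝ ({x, y} : Set H))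
    (hwx : ⟪w, x⟫ = 0) :
    |⟪w, y⟫| = ‖w‖ * ‖y - (⟪x, y⟫ / ‖x‖ ^ 2) • x‖ := by
  set t : ℝ := ⟪x, y⟫ / ‖x‖ ^ 2 with ht
  set y' : H := y - t • x with hy'
  have hxx : ⟪x, x⟫ = ‖x‖ ^ 2 := real_inner_self_eq_norm_sq x
  have hxne : ‖x‖ ^ 2 ≠ 0 := by
    have := norm_pos_iff.mpr hx; positivity
  have hy'x : ⟪y', x⟫ = 0 := by
    rw [hy', inner_sub_left, real_inner_smul_left, real_inner_comm x y, hxx, ht]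
    field_simp
    ring
  obtain ⟨a, b, hab⟩ := Submodule.mem_span_pair.mp hw
  have hw' : w = (a + b * t) • x + b • y' := by
    rw [hy']; rw [← hab]; module
  have habt : a + b * t = 0 := by
    have := hwx
    rw [hw', inner_add_left, real_inner_smul_left, real_inner_smul_left, hy'x, hxx] at this
    have : (a + b * t) * ‖x‖ ^ 2 = 0 := by linarith
    exact (mul_eq_zero.mp this).resolve_right hxne
  have hwb : w = b • y' := by rw [hw', habt, zero_smul, zero_add]
  have h1 : ⟪w, y⟫ = b * ‖y'‖ ^ 2 := by
    have : ⟪y', y⟫ = ‖y'‖ ^ 2 := by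
      have : ⟪y', y'⟫ = ⟪y', y⟫ - t * ⟪y', x⟫ := by
        rw [hy']; rw [inner_sub_right, real_inner_smul_right]
      rw [hy'x, mul_zero, sub_zero] at this
      rw [← this, real_inner_self_eq_norm_sq]
    rw [hwb, real_inner_smul_left, this]
  rw [h1, hwb, norm_smul, abs_mul, Real.norm_eq_abs, sq]
  rw [abs_of_nonneg (mul_nonneg (norm_nonneg y') (norm_nonneg y'))]
  ring

lemma alg_low (P Q nx ny s c D : ℝ) (hnx : 0 < nx) (hny : 0 < ny) (hc : 0 < c)
    (hs : 0 ≤ s) (h : |Q * (nx * s) - P * (ny * s)| ≤ D * (nx * ny * c)) :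
    |P / nx - Q / ny| * (s / c) ≤ D := by
  have h2 : |Q * nx - P * ny| * s ≤ D * (nx * ny * c) := by
    rw [show Q * (nx * s) - P * (ny * s) = (Q * nx - P * ny) * s by ring, abs_mul,
      abs_of_nonneg hs] at h
    exact h
  have he : |P / nx - Q / ny| = |Q * nx - P * ny| / (nx * ny) := by
    rw [eq_div_iff (by positivity), ← abs_of_pos (mul_pos hnx hny), ← abs_mul, abs_sub_comm]
    congr 1
    field_simp
  have key : |P / nx - Q / ny| * s ≤ D * c := by
    rw [he, div_mul_eq_mul_div, div_le_iff₀ (mul_pos hnx hny)]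
    nlinarith [h2]
  calc |P / nx - Q / ny| * (s / c) = (|P / nx - Q / ny| * s) / c := by ring
    _ ≤ (D * c) / c := by gcongr
    _ = D := by field_simp

lemma alg_up (P Q nx ny s c D : ℝ) (hnx : 0 < nx) (hny : 0 < ny) (hc : 0 < c)
    (h : D * (nx * ny * c) ≤ P * (ny * s) + Q * (nx * s)) :
    D ≤ (P / nx + Q / ny) * (s / c) := by
  have key : D * c ≤ (P / nx + Q / ny) * s := by
    rw [div_add_div _ _ (ne_of_gt hnx) (ne_of_gt hny), div_mul_eq_mul_div,
      le_div_iff₀ (mul_pos hnx hny)]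
    nlinarith [h]
  calc D = (D * c) / c := by field_simp
    _ ≤ ((P / nx + Q / ny) * s) / c := by gcongr
    _ = (P / nx + Q / ny) * (s / c) := by ring


/-- For linearly independent `x, y` with `0 < ∠{x,y} < π/2` and `S = span{x,y}`:
`Ξ₋ ≤ |ρ(x) − ρ(y)| ≤ Ξ₊`, where
`Ξ_± = |‖P_S r(x)‖/‖x‖ ± ‖P_S r(y)‖/‖y‖| · tan∠{x,y}`. -/
theorem stmt_7 [CompleteSpace H] (A : H →L[ℝ] H) (hA : IsSelfAdjoint A)
    (x y : H) (hli : LinearIndependent ℝ ![x, y])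
    (hang₀ : 0 < ang x y) (hang₁ : ang x y < Real.pi / 2)
    (S : Submodule ℝ H) [FiniteDimensional ℝ S]
    (hS : S = Submodule.span ℝ ({x, y} : Set H)) :
    |‖(orthogonalProjection S (res A x) : H)‖ / ‖x‖
        - ‖(orthogonalProjection S (res A y) : H)‖ / ‖y‖| * Real.tan (ang x y)
      ≤ |rq A x - rq A y| ∧
    |rq A x - rq A y|
      ≤ (‖(orthogonalProjection S (res A x) : H)‖ / ‖x‖
          + ‖(orthogonalProjection S (res A y) : H)‖ / ‖y‖) * Real.tan (ang x y) := by
  have hx0 : x ≠ 0 := by simpa using hli.ne_zero 0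
  have hy0 : y ≠ 0 := by simpa using hli.ne_zero 1
  have hnx : (0:ℝ) < ‖x‖ := norm_pos_iff.mpr hx0
  have hny : (0:ℝ) < ‖y‖ := norm_pos_iff.mpr hy0
  have hxS : x ∈ S := by rw [hS]; exact subset_span (by simp)
  have hyS : y ∈ S := by rw [hS]; exact subset_span (by simp)
  -- residual orthogonality
  have hres : ∀ z : H, z ≠ 0 → ⟪res A z, z⟫ = 0 := by
    intro z hz
    have hzz : ⟪z, z⟫ ≠ 0 := by
      rw [real_inner_self_eq_norm_sq]
      have := norm_pos_iff.mpr hz; positivity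
    rw [res, rq, inner_sub_left, real_inner_smul_left, real_inner_comm z (A z)]
    field_simp
    ring
  set px : H := (orthogonalProjection S (res A x) : H) with hpx
  set py : H := (orthogonalProjection S (res A y) : H) with hpy
  have hproj : ∀ (v w : H), w ∈ S → ⟪(orthogonalProjection S v : H), w⟫ = ⟪v, w⟫ := by
    intro v w hw
    have h0 : ⟪v - (orthogonalProjection S v : H), w⟫ = 0 := S.starProjection_inner_eq_zero v w hw
    rw [inner_sub_left] at h0
    linarith
  have hpxx : ⟪px, x⟫ = 0 := by rw [hpx, hproj _ _ hxS, hres x hx0]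
  have hpyy : ⟪py, y⟫ = 0 := by rw [hpy, hproj _ _ hyS, hres y hy0]
  have hpxy : ⟪px, y⟫ = ⟪res A x, y⟫ := hproj _ _ hyS
  have hpyx : ⟪py, x⟫ = ⟪res A y, x⟫ := hproj _ _ hxS
  -- trigonometry
  set c : ℝ := |⟪x, y⟫| / (‖x‖ * ‖y‖) with hcdef
  have hc0 : 0 ≤ c := by positivity
  have hc1 : c ≤ 1 := by
    rw [hcdef, div_le_one (by positivity)]; exact abs_real_inner_le_norm x y
  have hcos : Real.cos (ang x y) = c := Real.cos_arccos (by linarith) hc1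
  have hcpos : 0 < c := by
    rw [← hcos]
    exact Real.cos_pos_of_mem_Ioo ⟨by linarith [Real.pi_pos, hang₀], hang₁⟩
  set s : ℝ := Real.sqrt (1 - c ^ 2) with hsdef
  have hs0 : 0 ≤ s := Real.sqrt_nonneg _
  have hsin : Real.sin (ang x y) = s := by rw [ang, Real.sin_arccos]
  have htan : Real.tan (ang x y) = s / c := by
    rw [Real.tan_eq_sin_div_cos, hsin, hcos]
  -- norm of the orthogonal-complement components
  have hperp : ∀ u v : H, u ≠ 0 →
      ‖v - (⟪u, v⟫ / ‖u‖ ^ 2) • u‖ = ‖v‖ * Real.sqrt (1 - (|⟪u, v⟫| / (‖u‖ * ‖v‖)) ^ 2) := by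
    intro u v hu
    have hnu : (0:ℝ) < ‖u‖ := norm_pos_iff.mpr hu
    rcases eq_or_ne v 0 with rfl | hv
    · simp
    have hnv : (0:ℝ) < ‖v‖ := norm_pos_iff.mpr hv
    have hsq : ‖v - (⟪u, v⟫ / ‖u‖ ^ 2) • u‖ ^ 2 = ‖v‖ ^ 2 - ⟪u, v⟫ ^ 2 / ‖u‖ ^ 2 := by
      rw [norm_sub_sq_real, norm_smul, real_inner_smul_right, Real.norm_eq_abs, mul_pow, sq_abs]
      rw [real_inner_comm v u]
      field_simp
      ring
    have hrhs : (‖v‖ * Real.sqrt (1 - (|⟪u, v⟫| / (‖u‖ * ‖v‖)) ^ 2)) ^ 2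
        = ‖v‖ ^ 2 - ⟪u, v⟫ ^ 2 / ‖u‖ ^ 2 := by
      rw [mul_pow, Real.sq_sqrt]
      · rw [div_pow, sq_abs, mul_pow]
        field_simp
      · have h1 : |⟪u, v⟫| / (‖u‖ * ‖v‖) ≤ 1 := by
          rw [div_le_one (by positivity)]; exact abs_real_inner_le_norm u v
        nlinarith [abs_nonneg (⟪u, v⟫ : ℝ), div_nonneg (abs_nonneg (⟪u, v⟫:ℝ)) (le_of_lt (mul_pos hnu hnv))]
    rw [← Real.sqrt_sq (norm_nonneg _), hsq, ← hrhs, Real.sqrt_sq (by positivity)]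
  have hyperp : ‖y - (⟪x, y⟫ / ‖x‖ ^ 2) • x‖ = ‖y‖ * s := by
    rw [hperp x y hx0, hsdef, hcdef]
  have hxperp : ‖x - (⟪y, x⟫ / ‖y‖ ^ 2) • y‖ = ‖x‖ * s := by
    rw [hperp y x hy0, real_inner_comm x y, mul_comm ‖y‖ ‖x‖, hsdef, hcdef]
  have hpxS : px ∈ Submodule.span ℝ ({x, y} : Set H) := by
    have : px ∈ S := by rw [hpx]; exact SetLike.coe_mem _
    rwa [hS] at this
  have hpyS : py ∈ Submodule.span ℝ ({y, x} : Set H) := by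
    have : py ∈ S := by rw [hpy]; exact SetLike.coe_mem _
    rwa [hS, Set.pair_comm] at this
  have ha : |⟪res A x, y⟫| = ‖px‖ * (‖y‖ * s) := by
    rw [← hpxy, key_geom x y px hx0 hpxS hpxx, hyperp]
  have hb : |⟪res A y, x⟫| = ‖py‖ * (‖x‖ * s) := by
    rw [← hpyx, key_geom y x py hy0 hpyS hpyy, hxperp]
  have hid : (rq A x - rq A y) * ⟪x, y⟫ = ⟪res A y, x⟫ - ⟪res A x, y⟫ := by
    have hsym : ⟪A x, y⟫ = ⟪A y, x⟫ := by
      have h1 := hA.isSymmetric x y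
      simp only [ContinuousLinearMap.coe_coe] at h1
      rw [h1, real_inner_comm]
    simp only [res, inner_sub_left, real_inner_smul_left]
    rw [real_inner_comm x y]
    linear_combination hsym
  have hxyc : |⟪x, y⟫| = ‖x‖ * ‖y‖ * c := by rw [hcdef]; field_simp
  have habs : |rq A x - rq A y| * (‖x‖ * ‖y‖ * c) = |⟪res A y, x⟫ - ⟪res A x, y⟫| := by
    rw [← hxyc, ← abs_mul, hid]
  constructor
  · rw [htan]
    apply alg_low _ _ _ _ _ _ _ hnx hny hcpos hs0
    rw [← hb, ← ha, habs]
    exact abs_abs_sub_abs_le_abs_sub _ _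
  · rw [htan]
    apply alg_up _ _ _ _ _ _ _ hnx hny hcpos
    rw [← ha, ← hb, habs]
    calc |⟪res A y, x⟫ - ⟪res A x, y⟫| ≤ |⟪res A y, x⟫| + |⟪res A x, y⟫| := abs_sub _ _
      _ = |⟪res A x, y⟫| + |⟪res A y, x⟫| := add_comm _ _
end
end

section
/- Let A be a self-adjoint operator on a two-dimensional inner product space with eigenvalues μ > ν and eigenvector u (for either eigenvalue). For any linearly independent nonzero vectors x and y, |ρ(x) − ρ(y)| = (μ − ν)·sin(∠{x,u} + ∠{y,u})·|sin(∠{x,u} − ∠{y,u})|. -/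
/-!
In an orthonormal eigenbasis `(bᵢ)` of `A` with eigenvalues `λᵢ`, Parseval gives
`ρ(x) = ∑ λᵢ cos² ∠{x, bᵢ}` with `∑ cos² ∠{x, bᵢ} = 1`. In dimension two this leaves
`ρ(x) = μ - (μ - ν) sin² ∠{x, u₁} = ν + (μ - ν) sin² ∠{x, u₂}`, so
`|ρ(x) - ρ(y)| = (μ - ν) |sin² ∠{x, u} - sin² ∠{y, u}|`, and
`sin² a - sin² b = sin (a + b) sin (a - b)` with `sin (a + b) ≥ 0` for acute `a, b`.
-/

open scoped RealInnerProductSpace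
open Submodule

noncomputable section

variable {H : Type*} [NormedAddCommGroup H] [InnerProductSpace ℝ H]

theorem Real.sin_add_mul_sin_sub (x y : ℝ) :
    sin (x + y) * sin (x - y) = sin x ^ 2 - sin y ^ 2 := by
  rw [sin_add, sin_sub]
  linear_combination sin x ^ 2 * sin_sq_add_cos_sq y - sin y ^ 2 * sin_sq_add_cos_sq x

theorem ang_nonneg (x y : H) : 0 ≤ ang x y := Real.arccos_nonneg _

theorem ang_le_pi_div_two (x y : H) : ang x y ≤ Real.pi / 2 :=
  Real.arccos_le_pi_div_two.2 (by positivity)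

theorem cos_sq_ang_of_norm_eq_one (x : H) {u : H} (hu : ‖u‖ = 1) :
    Real.cos (ang x u) ^ 2 = ⟪x, u⟫ ^ 2 / ‖x‖ ^ 2 := by
  rw [cos_ang, hu, mul_one, div_pow, sq_abs]

section OrthonormalEigenbasis

variable {ι : Type*} [Fintype ι] {A : H →L[ℝ] H} (b : OrthonormalBasis ι ℝ H) {μ : ι → ℝ}

theorem inner_apply_self_eq_sum_of_eigenbasis (hA : (A : H →ₗ[ℝ] H).IsSymmetric)
    (hb : ∀ i, A (b i) = μ i • b i) (x : H) :
    ⟪x, A x⟫ = ∑ i, μ i * ⟪x, b i⟫ ^ 2 := by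
  rw [← b.sum_inner_mul_inner]
  refine Finset.sum_congr rfl fun i _ => ?_
  have hAbi : ⟪b i, A x⟫ = μ i * ⟪x, b i⟫ := calc
    ⟪b i, A x⟫ = ⟪A (b i), x⟫ := (hA (b i) x).symm
    _ = μ i * ⟪x, b i⟫ := by rw [hb, real_inner_smul_left, real_inner_comm]
  rw [hAbi]
  ring

theorem rq_eq_sum_mul_cos_sq_ang (hA : (A : H →ₗ[ℝ] H).IsSymmetric)
    (hb : ∀ i, A (b i) = μ i • b i) (x : H) : rq A x = ∑ i, μ i * Real.cos (ang x (b i)) ^ 2 := by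
  simp only [rq, inner_apply_self_eq_sum_of_eigenbasis b hA hb, real_inner_self_eq_norm_sq,
    Finset.sum_div, cos_sq_ang_of_norm_eq_one x (b.orthonormal.norm_eq_one _), mul_div_assoc]

theorem sum_cos_sq_ang_eq_one {x : H} (hx : x ≠ 0) :
    ∑ i, Real.cos (ang x (b i)) ^ 2 = 1 := by
  simp only [cos_sq_ang_of_norm_eq_one x (b.orthonormal.norm_eq_one _), ← Finset.sum_div,
    b.sum_sq_inner_left]
  exact div_self (by positivity)

end OrthonormalEigenbasis

section TwoDimensional

variable {A : H →L[ℝ] H} (hA : (A : H →ₗ[ℝ] H).IsSymmetric)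
  {b : OrthonormalBasis (Fin 2) ℝ H} {μ : Fin 2 → ℝ} (hb : ∀ i, A (b i) = μ i • b i)
include hA hb

theorem rq_eq_of_fin_two {x : H} (hx : x ≠ 0) :
    rq A x = μ 0 - (μ 0 - μ 1) * Real.sin (ang x (b 0)) ^ 2 ∧
      rq A x = μ 1 + (μ 0 - μ 1) * Real.sin (ang x (b 1)) ^ 2 := by
  have hsum := sum_cos_sq_ang_eq_one b hx
  rw [Fin.sum_univ_two] at hsum
  rw [rq_eq_sum_mul_cos_sq_ang b hA hb, Fin.sum_univ_two, Real.sin_sq, Real.sin_sq]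
  exact ⟨by linear_combination μ 1 * hsum, by linear_combination μ 0 * hsum⟩

theorem abs_rq_sub_rq_of_fin_two {x y : H} (hx : x ≠ 0) (hy : y ≠ 0) (i : Fin 2) :
    |rq A x - rq A y|
      = |μ 0 - μ 1| * |Real.sin (ang x (b i)) ^ 2 - Real.sin (ang y (b i)) ^ 2| := by
  obtain ⟨hx₀, hx₁⟩ := rq_eq_of_fin_two hA hb hx
  obtain ⟨hy₀, hy₁⟩ := rq_eq_of_fin_two hA hb hy
  revert i
  rw [Fin.forall_fin_two]
  constructor
  · rw [hx₀, hy₀, ← abs_mul, abs_sub_comm]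
    congr 1
    ring
  · rw [hx₁, hy₁, ← abs_mul]
    congr 1
    ring

end TwoDimensional

theorem stmt_9_general [FiniteDimensional ℝ H] (hdim : Module.finrank ℝ H = 2)
    (A : H →L[ℝ] H) (hA : IsSelfAdjoint A)
    (μ ν : ℝ) (hμν : ν < μ) (u₁ u₂ : H) (hu₁ : ‖u₁‖ = 1) (hu₂ : ‖u₂‖ = 1)
    (horth : ⟪u₁, u₂⟫ = 0) (he₁ : A u₁ = μ • u₁) (he₂ : A u₂ = ν • u₂)
    (u : H) (hu : u = u₁ ∨ u = u₂)
    (x y : H) (hx : x ≠ 0) (hy : y ≠ 0) :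
    |rq A x - rq A y|
      = (μ - ν) * Real.sin (ang x u + ang y u) * |Real.sin (ang x u - ang y u)| := by
  have hon : Orthonormal ℝ ![u₁, u₂] := by simp [hu₁, hu₂, horth]
  let b := OrthonormalBasis.mk hon
    (hon.linearIndependent.span_eq_top_of_card_eq_finrank (by simp [hdim])).ge
  have hb : ∀ i, A (b i) = ![μ, ν] i • b i := by
    intro i; fin_cases i <;> simp [b, he₁, he₂]
  obtain ⟨i, rfl⟩ : ∃ i, b i = u := hu.elim (fun h => ⟨0, by simp [b, h]⟩)
    (fun h => ⟨1, by simp [b, h]⟩)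
  have hsin_add : 0 ≤ Real.sin (ang x (b i) + ang y (b i)) :=
    Real.sin_nonneg_of_nonneg_of_le_pi (by linarith [ang_nonneg x (b i), ang_nonneg y (b i)])
      (by linarith [ang_le_pi_div_two x (b i), ang_le_pi_div_two y (b i)])
  rw [abs_rq_sub_rq_of_fin_two hA.isSymmetric hb hx hy i, ← Real.sin_add_mul_sin_sub, abs_mul,
    abs_of_nonneg hsin_add, mul_assoc]
  simp [abs_of_pos (sub_pos.2 hμν)]

/-- In a two-dimensional space with eigenvalues `μ > ν` of a self-adjoint `A` and a unit
eigenvector `u` (for either eigenvalue), for linearly independent nonzero `x, y`: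
`|ρ(x) − ρ(y)| = (μ − ν)·sin(∠{x,u} + ∠{y,u})·|sin(∠{x,u} − ∠{y,u})|`. -/
theorem stmt_9 [FiniteDimensional ℝ H] (hdim : Module.finrank ℝ H = 2)
    (A : H →L[ℝ] H) (hA : IsSelfAdjoint A)
    (μ ν : ℝ) (hμν : ν < μ) (u₁ u₂ : H) (hu₁ : ‖u₁‖ = 1) (hu₂ : ‖u₂‖ = 1)
    (horth : ⟪u₁, u₂⟫ = 0) (he₁ : A u₁ = μ • u₁) (he₂ : A u₂ = ν • u₂)
    (u : H) (hu : u = u₁ ∨ u = u₂)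
    (x y : H) (hx : x ≠ 0) (hy : y ≠ 0) (hli : LinearIndependent ℝ ![x, y]) :
    |rq A x - rq A y|
      = (μ - ν) * Real.sin (ang x u + ang y u) * |Real.sin (ang x u - ang y u)| :=
  stmt_9_general hdim A hA μ ν hμν u₁ u₂ hu₁ hu₂ horth he₁ he₂ u hu x y hx hy
end
end

section
/- The acute angle between one-dimensional subspaces satisfies the triangle inequality: for nonzero vectors x, y, u in an inner product space, |∠{x,u} − ∠{y,u}| ≤ ∠{x,y} ≤ ∠{x,u} + ∠{y,u}, where ∠{a,b} = arccos(|⟨a,b⟩|/(‖a‖‖b‖)). -/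
open scoped RealInnerProductSpace
open Submodule

noncomputable section

variable {H : Type*} [NormedAddCommGroup H] [InnerProductSpace ℝ H]

/-!
Since `ang x y = arccos |cos (angle x y)| = min (angle x y) (angle x (-y))` and `ang` ignores the
sign of its arguments, replacing `u` by `±u` and then `y` by `±y` turns `ang x u` and `ang u y`
into genuine angles; the triangle inequality for `InnerProductGeometry.angle` then gives
`ang x y ≤ ang x u + ang u y`, and the lower bound follows by permuting the three vectors.
-/

open InnerProductGeometry

lemma ang_comm (x y : H) : ang x y = ang y x := by
  rw [ang, ang, real_inner_comm, mul_comm]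

lemma ang_neg_right (x y : H) : ang x (-y) = ang x y := by
  simp only [ang, inner_neg_right, abs_neg, norm_neg]

lemma ang_eq_min_angle (x y : H) : ang x y = min (angle x y) (angle x (-y)) := by
  have hneg : angle x (-y) = Real.arccos (-(⟪x, y⟫ / (‖x‖ * ‖y‖))) := by
    rw [angle, inner_neg_right, norm_neg, neg_div]
  rw [hneg, angle, ← Real.antitone_arccos.map_max, ← abs_eq_max_neg, ang, abs_div,
    abs_of_nonneg (by positivity : 0 ≤ ‖x‖ * ‖y‖)]

lemma ang_le_angle (x y : H) : ang x y ≤ angle x y :=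
  (ang_eq_min_angle x y).trans_le (min_le_left _ _)

lemma exists_ang_eq_angle (x y : H) :
    ∃ y' : H, (∀ z, ang z y' = ang z y) ∧ ang x y = angle x y' := by
  rcases min_choice (angle x y) (angle x (-y)) with h | h
  · exact ⟨y, fun _ ↦ rfl, (ang_eq_min_angle x y).trans h⟩
  · exact ⟨-y, fun z ↦ ang_neg_right z y, (ang_eq_min_angle x y).trans h⟩

theorem ang_le_ang_add_ang (x y u : H) : ang x y ≤ ang x u + ang u y := by
  obtain ⟨u', hu', hxu⟩ := exists_ang_eq_angle x u
  obtain ⟨y', hy', huy⟩ := exists_ang_eq_angle u' y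
  calc ang x y = ang x y' := (hy' x).symm
    _ ≤ angle x y' := ang_le_angle x y'
    _ ≤ angle x u' + angle u' y' := angle_le_angle_add_angle x u' y'
    _ = ang x u + ang u y := by rw [← hxu, ← huy, ang_comm u' y, hu', ang_comm y u]

theorem stmt_12_general (x y u : H) :
    |ang x u - ang y u| ≤ ang x y ∧ ang x y ≤ ang x u + ang y u := by
  have hxu := ang_le_ang_add_ang x u y
  have hyu := ang_le_ang_add_ang y u x
  have hxy := ang_le_ang_add_ang x y u
  rw [ang_comm y x] at hyu
  rw [ang_comm u y] at hxy
  exact ⟨abs_sub_le_iff.2 ⟨by linarith, by linarith⟩, hxy⟩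

/-- Triangle inequality for the acute angle between one-dimensional subspaces:
for nonzero `x, y, u`, `|∠{x,u} − ∠{y,u}| ≤ ∠{x,y} ≤ ∠{x,u} + ∠{y,u}`. -/
theorem stmt_12 (x y u : H) (hx : x ≠ 0) (hy : y ≠ 0) (hu : u ≠ 0) :
    |ang x u - ang y u| ≤ ang x y ∧ ang x y ≤ ang x u + ang y u :=
  stmt_12_general x y u
end
end

section
/- Let A be a bounded self-adjoint operator, x an eigenvector of A with eigenvalue λ, and y a nonzero vector with 0 < ∠{x,y} < π/2. Let S = span{x,y} with orthogonal projector P_S. Then |λ − ρ(y)| = (‖P_S r(y)‖/‖y‖)·tan(∠{x,y}), where r(y) = Ay − ρ(y)y. -/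
/-!
Since `r(y) ⊥ y`, projecting `r(y)` onto `S = span{x, y}` is the same as projecting it onto the
line through `u = x - P_y x`, the component of `x` orthogonal to `y`. Hence
`‖P_S r(y)‖ = |⟪x, r(y)⟫| / ‖u‖`, where `‖u‖ = ‖x‖ sin θ` and, by self-adjointness,
`⟪x, r(y)⟫ = (λ - ρ(y)) ⟪x, y⟫` with `|⟪x, y⟫| = ‖x‖ ‖y‖ cos θ`.
-/

open scoped RealInnerProductSpace
open Submodule

noncomputable section

variable {H : Type*} [NormedAddCommGroup H] [InnerProductSpace ℝ H]

theorem inner_res_self_eq_zero (A : H →L[ℝ] H) (y : H) : ⟪y, res A y⟫ = 0 := by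
  rcases eq_or_ne y 0 with rfl | hy
  · simp
  rw [res, inner_sub_right, real_inner_smul_right, rq,
    div_mul_cancel₀ _ (inner_self_ne_zero.2 hy), sub_self]

theorem inner_res_of_apply_eq_smul {A : H →L[ℝ] H} (hA : (A : H →ₗ[ℝ] H).IsSymmetric)
    {lam : ℝ} {x : H} (hx : A x = lam • x) (y : H) :
    ⟪x, res A y⟫ = (lam - rq A y) * ⟪x, y⟫ := by
  have hAxy : ⟪x, A y⟫ = lam * ⟪x, y⟫ := by
    rw [← real_inner_smul_left, ← hx]
    exact (hA x y).symm
  rw [res, inner_sub_right, real_inner_smul_right, hAxy, sub_mul]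

theorem norm_starProjection_singleton (u z : H) :
    ‖(ℝ ∙ u).starProjection z‖ = |⟪u, z⟫| / ‖u‖ := by
  rcases eq_or_ne u 0 with rfl | hu
  · simp
  simp only [starProjection_singleton, norm_smul, RCLike.ofReal_real_eq_id, id, norm_div,
    Real.norm_eq_abs, abs_pow, abs_norm]
  field_simp

theorem starProjection_span_pair_of_inner_eq_zero {x y z : H} (K : Submodule ℝ H)
    [K.HasOrthogonalProjection] (hK : K = span ℝ {x, y}) (hz : ⟪y, z⟫ = 0) :
    K.starProjection z = (ℝ ∙ (x - (ℝ ∙ y).starProjection x)).starProjection z := by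
  set u := x - (ℝ ∙ y).starProjection x
  set v := (ℝ ∙ u).starProjection z
  obtain ⟨c, hc⟩ := mem_span_singleton.1 ((ℝ ∙ y).starProjection_apply_mem x)
  have hx : x = u + c • y := by simp only [u, hc, sub_add_cancel]
  refine eq_starProjection_of_mem_of_inner_eq_zero ?_ fun w hw => ?_
  · have hxK : x ∈ K := hK ▸ subset_span (by simp)
    have hyK : y ∈ K := hK ▸ subset_span (by simp)
    have huK : u ∈ K := K.sub_mem hxK (hc ▸ K.smul_mem c hyK)
    exact (span_singleton_le_iff_mem u K).2 huK (starProjection_apply_mem _ z)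
  · have hyu : ⟪y, u⟫ = 0 :=
      (mem_orthogonal_singleton_iff_inner_right).1 (sub_starProjection_mem_orthogonal x)
    obtain ⟨d, hd⟩ : ∃ d : ℝ, d • u = v := mem_span_singleton.1 (starProjection_apply_mem _ z)
    have hzu : ⟪z - v, u⟫ = 0 := starProjection_inner_eq_zero z u (mem_span_singleton_self u)
    have hzy : ⟪z - v, y⟫ = 0 := by
      rw [inner_sub_left, real_inner_comm, hz, ← hd, real_inner_smul_left, real_inner_comm, hyu]
      ring
    rw [hK, mem_span_pair] at hw
    obtain ⟨a, b, rfl⟩ := hw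
    simp only [hx, inner_add_right, real_inner_smul_right, hzu, hzy]
    ring

theorem norm_starProjection_span_pair_of_inner_eq_zero {x y z : H} (K : Submodule ℝ H)
    [K.HasOrthogonalProjection] (hK : K = span ℝ {x, y}) (hz : ⟪y, z⟫ = 0) :
    ‖K.starProjection z‖ = |⟪x, z⟫| / ‖x - (ℝ ∙ y).starProjection x‖ := by
  obtain ⟨c, hc⟩ := mem_span_singleton.1 ((ℝ ∙ y).starProjection_apply_mem x)
  have hxz : ⟪x - (ℝ ∙ y).starProjection x, z⟫ = ⟪x, z⟫ := by
    rw [inner_sub_left, ← hc, real_inner_smul_left, hz, mul_zero, sub_zero]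
  rw [starProjection_span_pair_of_inner_eq_zero K hK hz, norm_starProjection_singleton, hxz]

theorem abs_inner_eq_mul_cos_ang (x y : H) : |⟪x, y⟫| = ‖x‖ * ‖y‖ * Real.cos (ang x y) := by
  rcases eq_or_ne x 0 with rfl | hx
  · simp
  rcases eq_or_ne y 0 with rfl | hy
  · simp
  have hc : 0 ≤ |⟪x, y⟫| / (‖x‖ * ‖y‖) := by positivity
  rw [ang, Real.cos_arccos (by linarith)
    ((div_le_one (by positivity)).2 (abs_real_inner_le_norm x y))]
  field_simp

theorem norm_sub_starProjection_singleton_eq_mul_sin_ang (x y : H) :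
    ‖x - (ℝ ∙ y).starProjection x‖ = ‖x‖ * Real.sin (ang x y) := by
  rcases eq_or_ne x 0 with rfl | hx
  · simp
  rcases eq_or_ne y 0 with rfl | hy
  · simp [ang]
  have hpyth := norm_add_sq_eq_norm_sq_add_norm_sq_real
    (starProjection_inner_eq_zero x _ ((ℝ ∙ y).starProjection_apply_mem x))
  rw [sub_add_cancel, norm_starProjection_singleton, ← sq, ← sq, ← sq] at hpyth
  have hc : |⟪x, y⟫| / (‖x‖ * ‖y‖) ≤ 1 :=
    div_le_one_of_le₀ (abs_real_inner_le_norm x y) (by positivity)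
  have hc2 : 0 ≤ 1 - (|⟪x, y⟫| / (‖x‖ * ‖y‖)) ^ 2 := sub_nonneg.2 (pow_le_one₀ (by positivity) hc)
  rw [ang, Real.sin_arccos]
  refine (pow_left_inj₀ (norm_nonneg _) (by positivity) two_ne_zero).1 ?_
  rw [mul_pow, Real.sq_sqrt hc2, eq_sub_of_add_eq hpyth.symm, div_pow, div_pow, sq_abs, sq_abs,
    real_inner_comm]
  field_simp

/-- If `x` is an eigenvector of `A` with eigenvalue `λ`, `y` is nonzero with
`0 < ∠{x,y} < π/2`, and `S = span{x,y}`, then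
`|λ − ρ(y)| = (‖P_S r(y)‖/‖y‖)·tan∠{x,y}`. -/
theorem stmt_14 [CompleteSpace H] (A : H →L[ℝ] H) (hA : IsSelfAdjoint A)
    (lam : ℝ) (x : H) (hx : x ≠ 0) (heig : A x = lam • x)
    (y : H) (hy : y ≠ 0)
    (hang₀ : 0 < ang x y) (hang₁ : ang x y < Real.pi / 2)
    (S : Submodule ℝ H) [FiniteDimensional ℝ S]
    (hS : S = Submodule.span ℝ ({x, y} : Set H)) :
    |lam - rq A y|
      = ‖(orthogonalProjection S (res A y) : H)‖ / ‖y‖ * Real.tan (ang x y) := by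
  have hsin : Real.sin (ang x y) ≠ 0 :=
    (Real.sin_pos_of_pos_of_lt_pi hang₀ (by linarith [Real.pi_pos])).ne'
  have hcos : Real.cos (ang x y) ≠ 0 :=
    (Real.cos_pos_of_mem_Ioo ⟨by linarith, hang₁⟩).ne'
  have hproj := norm_starProjection_span_pair_of_inner_eq_zero S hS (inner_res_self_eq_zero A y)
  rw [inner_res_of_apply_eq_smul (ContinuousLinearMap.isSelfAdjoint_iff_isSymmetric.1 hA) heig,
    abs_mul, abs_inner_eq_mul_cos_ang, norm_sub_starProjection_singleton_eq_mul_sin_ang] at hproj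
  change |lam - rq A y| = ‖S.starProjection (res A y)‖ / ‖y‖ * Real.tan (ang x y)
  rw [hproj, Real.tan_eq_sin_div_cos]
  have hxn : ‖x‖ ≠ 0 := norm_ne_zero_iff.2 hx
  have hyn : ‖y‖ ≠ 0 := norm_ne_zero_iff.2 hy
  field_simp
end
end

section
/- Let A be a bounded self-adjoint operator, x an eigenvector with eigenvalue λ = ρ(x), and y a nonzero vector with ∠{x,y} > 0. Then |λ − ρ(y)| ≤ (Σ_max(A) − Σ_min(A))·sin²(∠{x,y}), where Σ_max(A) and Σ_min(A) are the largest and smallest points of the spectrum of A. -/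
/-!
Write `y = a x + w` with `w ⟂ x`. As `x` is an eigenvector of the symmetric `A`, the cross terms
drop out and `λ - ρ(y) = (λ - ρ(w)) ‖w‖² / ‖y‖²`, while `sin² ∠{x,y} = ‖w‖² / ‖y‖²`. Both `λ = ρ(x)`
and `ρ(w)` lie in `[Σ_min, Σ_max]`: shifted by `‖A‖`, the operator has nonnegative Rayleigh
quotients, so its norm, being their supremum, is a point of its spectrum.
-/

open scoped RealInnerProductSpace
open Submodule

noncomputable section

variable {H : Type*} [NormedAddCommGroup H] [InnerProductSpace ℝ H]

open scoped Pointwise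

namespace ContinuousLinearMap

variable {T : H →L[ℝ] H}

theorem norm_mem_spectrum_of_rayleighQuotient_nonneg [Nontrivial H]
    (hT : (T : H →ₗ[ℝ] H).IsSymmetric) (h : ∀ x, 0 ≤ T.rayleighQuotient x) :
    ‖T‖ ∈ spectrum ℝ T := by
  by_contra hnot
  obtain ⟨ε, hε, hle⟩ :=
    T.rayleighQuotient_le_of_norm_mem_resolventSet (by simpa [spectrum] using hnot)
  have : ‖T‖ ≤ ‖T‖ - ε := by
    rw [T.norm_eq_iSup_rayleighQuotient hT] at hle ⊢
    exact ciSup_le fun x ↦ (abs_of_nonneg (h x)).trans_le (hle x)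
  linarith

theorem rayleighQuotient_add_algebraMap {x : H} (hx : x ≠ 0) (c : ℝ) :
    (T + algebraMap ℝ (H →L[ℝ] H) c).rayleighQuotient x = T.rayleighQuotient x + c := by
  rw [rayleighQuotient_add]
  simp [rayleighQuotient, reApplyInnerSelf_apply, Algebra.algebraMap_eq_smul_one, inner_smul_left,
    hx]

theorem isSymmetric_add_algebraMap (hT : (T : H →ₗ[ℝ] H).IsSymmetric) (c : ℝ) :
    ((T + algebraMap ℝ (H →L[ℝ] H) c : H →L[ℝ] H) : H →ₗ[ℝ] H).IsSymmetric := fun x y ↦ by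
  simpa [Algebra.algebraMap_eq_smul_one, inner_add_left, inner_add_right, inner_smul_left,
    inner_smul_right] using hT x y

theorem exists_mem_spectrum_forall_rayleighQuotient_le [Nontrivial H]
    (hT : (T : H →ₗ[ℝ] H).IsSymmetric) :
    ∃ μ ∈ spectrum ℝ T, ∀ x ≠ 0, T.rayleighQuotient x ≤ μ := by
  set S := T + algebraMap ℝ (H →L[ℝ] H) ‖T‖
  have hS : ∀ x, 0 ≤ S.rayleighQuotient x := by
    intro x
    rcases eq_or_ne x 0 with rfl | hx
    · simp
    · rw [rayleighQuotient_add_algebraMap hx]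
      linarith [abs_le.mp (T.rayleighQuotient_le_norm x)]
  have hSσ : ‖S‖ ∈ spectrum ℝ T + {‖T‖} := by
    rw [spectrum.add_singleton_eq]
    exact norm_mem_spectrum_of_rayleighQuotient_nonneg (isSymmetric_add_algebraMap hT _) hS
  obtain ⟨μ, hμ, _, rfl, hμS⟩ := hSσ
  refine ⟨μ, hμ, fun x hx ↦ ?_⟩
  have := S.rayleighQuotient_le_norm x
  rw [rayleighQuotient_add_algebraMap hx] at this
  linarith [le_abs_self (T.rayleighQuotient x + ‖T‖)]

theorem rayleighQuotient_le_sSup_spectrum [CompleteSpace H] (hT : (T : H →ₗ[ℝ] H).IsSymmetric)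
    {x : H} (hx : x ≠ 0) : T.rayleighQuotient x ≤ sSup (spectrum ℝ T) := by
  have : Nontrivial H := ⟨⟨x, 0, hx⟩⟩
  obtain ⟨μ, hμ, hle⟩ := exists_mem_spectrum_forall_rayleighQuotient_le hT
  exact (hle x hx).trans (le_csSup (spectrum.isBounded T).bddAbove hμ)

theorem sInf_spectrum_le_rayleighQuotient [CompleteSpace H] (hT : (T : H →ₗ[ℝ] H).IsSymmetric)
    {x : H} (hx : x ≠ 0) : sInf (spectrum ℝ T) ≤ T.rayleighQuotient x := by
  have hnegT : ((-T : H →L[ℝ] H) : H →ₗ[ℝ] H).IsSymmetric := fun u v ↦ by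
    simpa [inner_neg_left, inner_neg_right] using hT u v
  have := rayleighQuotient_le_sSup_spectrum hnegT hx
  rw [rayleighQuotient_neg_apply, ← spectrum.neg_eq, Real.sSup_neg] at this
  linarith

end ContinuousLinearMap

theorem rq_eq_rayleighQuotient (A : H →L[ℝ] H) (x : H) : rq A x = A.rayleighQuotient x := by
  simp [rq, ContinuousLinearMap.rayleighQuotient, ContinuousLinearMap.reApplyInnerSelf_apply,
    real_inner_comm]

theorem abs_rq_sub_rq_le [CompleteSpace H] {A : H →L[ℝ] H} (hA : (A : H →ₗ[ℝ] H).IsSymmetric)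
    {x y : H} (hx : x ≠ 0) (hy : y ≠ 0) :
    |rq A x - rq A y| ≤ sSup (spectrum ℝ A) - sInf (spectrum ℝ A) := by
  simp only [rq_eq_rayleighQuotient]
  rw [abs_sub_le_iff]
  constructor <;>
    linarith [A.rayleighQuotient_le_sSup_spectrum hA hx, A.rayleighQuotient_le_sSup_spectrum hA hy,
      A.sInf_spectrum_le_rayleighQuotient hA hx, A.sInf_spectrum_le_rayleighQuotient hA hy]

theorem rq_mul_norm_sq (A : H →L[ℝ] H) (x : H) : rq A x * ‖x‖ ^ 2 = ⟪x, A x⟫ := by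
  rcases eq_or_ne x 0 with rfl | hx
  · simp
  · rw [rq, real_inner_self_eq_norm_sq, div_mul_cancel₀ _ (by positivity)]

theorem rq_of_apply_eq_smul {A : H →L[ℝ] H} {lam : ℝ} {x : H} (hx : x ≠ 0)
    (heig : A x = lam • x) : rq A x = lam := by
  have := rq_mul_norm_sq A x
  rw [heig, real_inner_smul_right, real_inner_self_eq_norm_sq] at this
  exact mul_right_cancel₀ (by positivity) this

theorem exists_eq_smul_add_and_inner_eq_zero {x : H} (hx : x ≠ 0) (y : H) :
    ∃ (a : ℝ) (w : H), y = a • x + w ∧ ⟪x, w⟫ = 0 := by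
  refine ⟨⟪x, y⟫ / ⟪x, x⟫, y - (⟪x, y⟫ / ⟪x, x⟫) • x, by abel, ?_⟩
  rw [inner_sub_right, real_inner_smul_right, div_mul_cancel₀ _ (by simpa using hx), sub_self]

theorem norm_smul_add_sq_of_inner_eq_zero {x w : H} (hxw : ⟪x, w⟫ = 0) (a : ℝ) :
    ‖a • x + w‖ ^ 2 = a ^ 2 * ‖x‖ ^ 2 + ‖w‖ ^ 2 := by
  rw [sq, norm_add_sq_eq_norm_sq_add_norm_sq_real (by rw [real_inner_smul_left, hxw, mul_zero]),
    ← sq, ← sq, norm_smul, mul_pow, Real.norm_eq_abs, sq_abs]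

theorem sin_ang_sq_of_inner_eq_zero {x w : H} {a : ℝ} (hx : x ≠ 0) (hy : a • x + w ≠ 0)
    (hxw : ⟪x, w⟫ = 0) : Real.sin (ang x (a • x + w)) ^ 2 = ‖w‖ ^ 2 / ‖a • x + w‖ ^ 2 := by
  have hcos : (|⟪x, a • x + w⟫| / (‖x‖ * ‖a • x + w‖)) ^ 2 ≤ 1 := by
    rw [sq_le_one_iff_abs_le_one]
    simpa [abs_div, abs_mul] using abs_real_inner_div_norm_mul_norm_le_one x (a • x + w)
  have hxy : ⟪x, a • x + w⟫ = a * ‖x‖ ^ 2 := by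
    rw [inner_add_right, real_inner_smul_right, hxw, real_inner_self_eq_norm_sq, add_zero]
  have hy2 : ‖a • x + w‖ ^ 2 ≠ 0 := by positivity
  have hx2 : ‖x‖ ^ 2 ≠ 0 := by positivity
  rw [ang, Real.sin_arccos, Real.sq_sqrt (sub_nonneg.mpr hcos), div_pow, sq_abs, hxy, mul_pow,
    mul_pow]
  rw [norm_smul_add_sq_of_inner_eq_zero hxw] at hy2 ⊢
  field_simp
  ring

theorem sub_rq_smul_add_of_apply_eq_smul {A : H →L[ℝ] H} (hA : (A : H →ₗ[ℝ] H).IsSymmetric)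
    {lam : ℝ} {x w : H} {a : ℝ} (heig : A x = lam • x) (hxw : ⟪x, w⟫ = 0) (hy : a • x + w ≠ 0) :
    lam - rq A (a • x + w) = (lam - rq A w) * (‖w‖ ^ 2 / ‖a • x + w‖ ^ 2) := by
  have hwx : ⟪w, x⟫ = 0 := by rw [real_inner_comm, hxw]
  have hwAx : ⟪w, A x⟫ = 0 := by rw [heig, real_inner_smul_right, hwx, mul_zero]
  have hxAw : ⟪x, A w⟫ = 0 := by rw [← hA.apply_clm, real_inner_comm, hwAx]
  have hquad : ⟪a • x + w, A (a • x + w)⟫ = a ^ 2 * lam * ‖x‖ ^ 2 + ⟪w, A w⟫ := by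
    simp only [map_add, map_smul, inner_add_left, inner_add_right, real_inner_smul_left,
      real_inner_smul_right, heig, hxAw, hwx, real_inner_self_eq_norm_sq]
    ring
  have hy2 : ‖a • x + w‖ ^ 2 ≠ 0 := by positivity
  have hrqy := rq_mul_norm_sq A (a • x + w)
  have hrqw := rq_mul_norm_sq A w
  rw [hquad, norm_smul_add_sq_of_inner_eq_zero hxw] at hrqy
  rw [norm_smul_add_sq_of_inner_eq_zero hxw] at hy2 ⊢
  field_simp
  linear_combination hrqw - hrqy

theorem stmt_15_general [CompleteSpace H] (A : H →L[ℝ] H) (hA : IsSelfAdjoint A)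
    (lam : ℝ) (x : H) (hx : x ≠ 0) (heig : A x = lam • x)
    (y : H) (hy : y ≠ 0) :
    |lam - rq A y|
      ≤ (sSup (spectrum ℝ A) - sInf (spectrum ℝ A)) * Real.sin (ang x y) ^ 2 := by
  obtain ⟨a, w, rfl, hxw⟩ := exists_eq_smul_add_and_inner_eq_zero hx y
  rw [sin_ang_sq_of_inner_eq_zero hx hy hxw,
    sub_rq_smul_add_of_apply_eq_smul hA.isSymmetric heig hxw hy, abs_mul,
    abs_div, abs_pow, abs_pow, abs_norm, abs_norm]
  rcases eq_or_ne w 0 with rfl | hw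
  · simp
  · refine mul_le_mul_of_nonneg_right ?_ (by positivity)
    rw [← rq_of_apply_eq_smul hx heig]
    exact abs_rq_sub_rq_le hA.isSymmetric hx hw

/-- A priori bound: if `x` is an eigenvector of `A` with eigenvalue `λ = ρ(x)` and `y ≠ 0`
with `∠{x,y} > 0`, then `|λ − ρ(y)| ≤ (Σ_max(A) − Σ_min(A))·sin²∠{x,y}`, where `Σ_max(A)`
and `Σ_min(A)` are the largest and smallest points of the spectrum of `A`. -/
theorem stmt_15 [CompleteSpace H] (A : H →L[ℝ] H) (hA : IsSelfAdjoint A)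
    (lam : ℝ) (x : H) (hx : x ≠ 0) (heig : A x = lam • x)
    (y : H) (hy : y ≠ 0) (hang : 0 < ang x y) :
    |lam - rq A y|
      ≤ (sSup (spectrum ℝ A) - sInf (spectrum ℝ A)) * Real.sin (ang x y) ^ 2 :=
  stmt_15_general A hA lam x hx heig y hy
end
end
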